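/- arXiv:2201.00110 — 2 statements merged into one kernel-verified Lean document; each statement's English description precedes it below -/
import Mathlib

section
/- Let f be an expansive homeomorphism of a compact metric space X, and suppose there exist A ≥ 2, a metric D compatible with the topology of X, and δ > 0 such that for any x ∈ X and any y ∈ W^s_δ(x,D) one has D(f^{-1}(x), f^{-1}(y)) ≥ A·D(x,y) and D(fⁿ(x), fⁿ(y)) ≤ A^{-n}·D(x,y) for all n ≥ 0. If there exist a point a ∈ X and ε₁ > 0 with Σ^s_{ε₁}(a, D) ∩ ∂B_{ε₁}(a, D) ≠ ∅, then there exist an almost periodic point x* ∈ X and ε₂ > 0 such that Σ^s_{ε₂}(x*, D) ∩ ∂B_{ε₂}(x*, D) ≠ ∅. -/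
open Filter Topology

/-- The `n`-th iterate (`n ∈ ℤ`) of a homeomorphism `f`, as a map `X → X`. -/
def iterZ {X : Type*} [TopologicalSpace X] (f : X ≃ₜ X) (n : ℤ) : X → X :=
  ⇑(f.toEquiv ^ n)

/-- The ω-limit set of `x`: limits of `f^{nᵢ}(x)` along strictly increasing
sequences `0 < n₁ < n₂ < ⋯`. -/
def posLimitSet {X : Type*} [TopologicalSpace X] (f : X ≃ₜ X) (x : X) : Set X :=
  {y | ∃ n : ℕ → ℕ, StrictMono n ∧ 0 < n 0 ∧
    Tendsto (fun i => iterZ f (n i) x) atTop (𝓝 y)}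

/-- The α-limit set of `x`: limits of `f^{-nᵢ}(x)` along strictly increasing
sequences `0 < n₁ < n₂ < ⋯`. -/
def negLimitSet {X : Type*} [TopologicalSpace X] (f : X ≃ₜ X) (x : X) : Set X :=
  {y | ∃ n : ℕ → ℕ, StrictMono n ∧ 0 < n 0 ∧
    Tendsto (fun i => iterZ f (-(n i : ℤ)) x) atTop (𝓝 y)}

/-- `x` is recurrent if it is positively or negatively recurrent. -/
def RecurrentPt {X : Type*} [TopologicalSpace X] (f : X ≃ₜ X) (x : X) : Prop :=
  x ∈ posLimitSet f x ∨ x ∈ negLimitSet f x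

/-- `f` is expansive with expansivity constant `c`. -/
def ExpansiveWith {X : Type*} [MetricSpace X] (f : X ≃ₜ X) (c : ℝ) : Prop :=
  0 < c ∧ ∀ x y : X, x ≠ y → ∃ n : ℤ, c < dist (iterZ f n x) (iterZ f n y)

/-- `f` is expansive. -/
def Expansive {X : Type*} [MetricSpace X] (f : X ≃ₜ X) : Prop :=
  ∃ c : ℝ, ExpansiveWith f c

/-- The full orbit `{fⁿ(x) : n ∈ ℤ}` of a point. -/
def fullOrbit {X : Type*} [TopologicalSpace X] (f : X ≃ₜ X) (x : X) : Set X :=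
  Set.range fun n : ℤ => iterZ f n x

/-- `E` is a minimal set: nonempty, closed, invariant (`f(E) = E`), with no proper
nonempty closed invariant subset. -/
def IsMinimalSet {X : Type*} [TopologicalSpace X] (f : X ≃ₜ X) (E : Set X) : Prop :=
  E.Nonempty ∧ IsClosed E ∧ f '' E = E ∧
    ∀ E' ⊆ E, E'.Nonempty → IsClosed E' → f '' E' = E' → E' = E

/-- `x` is almost periodic: the closure of its orbit is a minimal set. -/
def AlmostPeriodicPt {X : Type*} [TopologicalSpace X] (f : X ≃ₜ X) (x : X) : Prop :=
  IsMinimalSet f (closure (fullOrbit f x))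

/-- The left shift `σ` on `ℤ → F`, as a homeomorphism. -/
def shiftH (F : Type*) [TopologicalSpace F] : (ℤ → F) ≃ₜ (ℤ → F) where
  toFun x n := x (n + 1)
  invFun x n := x (n - 1)
  left_inv x := by funext n; simp
  right_inv x := by funext n; simp
  continuous_toFun := continuous_pi fun n => continuous_apply (n + 1)
  continuous_invFun := continuous_pi fun n => continuous_apply (n - 1)

/-- The `n`-th power (`n ∈ ℕ`) of a homeomorphism, as a homeomorphism. -/
def hpow {X : Type*} [TopologicalSpace X] (f : X ≃ₜ X) : ℕ → X ≃ₜ X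
  | 0 => Homeomorph.refl X
  | n + 1 => (hpow f n).trans f

/-- The local stable set `W^s_ε(x)`. -/
def localStable {X : Type*} [MetricSpace X] (f : X ≃ₜ X) (ε : ℝ) (x : X) : Set X :=
  {y | ∀ n : ℕ, dist (iterZ f n x) (iterZ f n y) ≤ ε}

/-- The local unstable set `W^u_ε(x)`. -/
def localUnstable {X : Type*} [MetricSpace X] (f : X ≃ₜ X) (ε : ℝ) (x : X) : Set X :=
  {y | ∀ n : ℕ, dist (iterZ f (-(n : ℤ)) x) (iterZ f (-(n : ℤ)) y) ≤ ε}

/-- The stable set `W^s(x)`. -/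
def stableSet {X : Type*} [MetricSpace X] (f : X ≃ₜ X) (x : X) : Set X :=
  {y | Tendsto (fun n : ℕ => dist (iterZ f n x) (iterZ f n y)) atTop (𝓝 0)}

/-- The unstable set `W^u(x)`. -/
def unstableSet {X : Type*} [MetricSpace X] (f : X ≃ₜ X) (x : X) : Set X :=
  {y | Tendsto (fun n : ℕ => dist (iterZ f (-(n : ℤ)) x) (iterZ f (-(n : ℤ)) y)) atTop (𝓝 0)}

/-- `f` has the pseudo orbit tracing property. -/
def POTP {X : Type*} [MetricSpace X] (f : X ≃ₜ X) : Prop :=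
  ∀ ε > (0 : ℝ), ∃ δ > (0 : ℝ), ∀ u : ℤ → X,
    (∀ i : ℤ, dist (f (u i)) (u (i + 1)) < δ) →
    ∃ x : X, ∀ i : ℤ, dist (iterZ f i x) (u i) < ε

/-- `dD` is a metric on `X` compatible with the topology of `X`: it satisfies the metric
axioms and the open sets of `X` are exactly the sets that are open for `dD`. -/
def IsCompatibleMetric {X : Type*} [TopologicalSpace X] (dD : X → X → ℝ) : Prop :=
  (∀ x y : X, dD x y = 0 ↔ x = y) ∧
  (∀ x y : X, dD x y = dD y x) ∧
  (∀ x y z : X, dD x z ≤ dD x y + dD y z) ∧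
  (∀ s : Set X, IsOpen s ↔ ∀ x ∈ s, ∃ ε > (0 : ℝ), {y : X | dD x y < ε} ⊆ s)

/-!
Re-metrize `X` by `D`; then `Σ^s_{ε₁}(a)` is a nondegenerate continuum. Call a continuum through
`x` stable if it lies in `W^s_δ(x)`.

If some stable continuum is nondegenerate, pulling it back by `f` stretches it, so after trimming
every point of its backward orbit, hence of its α-limit set, carries a stable continuum of a fixed
radius. Otherwise small pieces of a nondegenerate continuum leave the `δ`-band in forward time,
and a limit of their forward images is a continuum of radius `δ` in `W^u_δ`. Expansivity bounds the
time such a continuum needs to leave the forward `δ`-band, so following the orbit and trimming at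
each exit, every point of a forward orbit, hence of its ω-limit set, carries a continuum of a fixed
radius. Either way some point `m` of a minimal set carries a nondegenerate continuum.

Finally push that continuum along the orbit of `m` so that its width, measured along the whole
orbit, approaches the supremum `β`; a limit continuum lies in `W^s_β` of a point of the minimal set
and reaches distance `β`, so by boundary bumping `Σ^s_β` meets the sphere.
-/
open Set Metric

section iterZ

variable {X : Type*} [TopologicalSpace X]

theorem iterZ_eq_coe_zpow (f : X ≃ₜ X) (n : ℤ) : iterZ f n = ⇑(f ^ n) := by
  let toPerm : (X ≃ₜ X) →* Equiv.Perm X :=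
    { toFun := Homeomorph.toEquiv, map_one' := rfl, map_mul' := fun _ _ => rfl }
  rw [iterZ, show f.toEquiv = toPerm f from rfl, ← map_zpow]
  rfl

@[fun_prop]
theorem continuous_iterZ (f : X ≃ₜ X) (n : ℤ) : Continuous (iterZ f n) := by
  rw [iterZ_eq_coe_zpow]
  exact (f ^ n).continuous

@[simp]
theorem iterZ_zero (f : X ≃ₜ X) (x : X) : iterZ f 0 x = x := rfl

@[simp]
theorem iterZ_iterZ (f : X ≃ₜ X) (m n : ℤ) (x : X) :
    iterZ f m (iterZ f n x) = iterZ f (m + n) x := by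
  simp [iterZ, zpow_add, Equiv.Perm.mul_apply]

theorem iterZ_one (f : X ≃ₜ X) (x : X) : iterZ f 1 x = f x := by simp [iterZ]

theorem iterZ_neg_one (f : X ≃ₜ X) (x : X) : iterZ f (-1) x = f.symm x := by
  simp [iterZ, Equiv.Perm.inv_def]

theorem iterZ_add_one (f : X ≃ₜ X) (n : ℤ) (x : X) : iterZ f (n + 1) x = f (iterZ f n x) := by
  rw [← iterZ_one, iterZ_iterZ, add_comm]

theorem iterZ_sub_one (f : X ≃ₜ X) (n : ℤ) (x : X) :
    iterZ f (n - 1) x = f.symm (iterZ f n x) := by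
  rw [← iterZ_neg_one, iterZ_iterZ, neg_add_eq_sub]

theorem iterZ_mem_of_image_eq {f : X ≃ₜ X} {E : Set X} (hE : f '' E = E) {x : X} (hx : x ∈ E)
    (n : ℤ) : iterZ f n x ∈ E := by
  induction n using Int.induction_on with
  | zero => exact hx
  | succ n ih => exact iterZ_add_one f n x ▸ hE ▸ mem_image_of_mem f ih
  | pred n ih =>
    rw [← hE] at ih
    obtain ⟨y, hy, hfy⟩ := ih
    rwa [iterZ_sub_one, ← hfy, f.symm_apply_apply]

end iterZ

section Continuum

variable {X : Type*} [TopologicalSpace X]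

structure IsContinuumThrough (x : X) (C : Set X) : Prop where
  mem : x ∈ C
  isCompact : IsCompact C
  isPreconnected : IsPreconnected C

theorem IsContinuumThrough.image {Y : Type*} [TopologicalSpace Y] {g : X → Y} (hg : Continuous g)
    {x : X} {C : Set X} (h : IsContinuumThrough x C) : IsContinuumThrough (g x) (g '' C) :=
  ⟨mem_image_of_mem g h.mem, h.isCompact.image hg, h.isPreconnected.image g hg.continuousOn⟩

theorem isContinuumThrough_connectedComponentIn {S : Set X} (hS : IsCompact S) {x : X}
    (hx : x ∈ S) : IsContinuumThrough x (connectedComponentIn S x) := by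
  have : CompactSpace S := isCompact_iff_compactSpace.mp hS
  refine ⟨mem_connectedComponentIn hx, ?_, isPreconnected_connectedComponentIn⟩
  rw [connectedComponentIn_eq_image hx]
  exact isClosed_connectedComponent.isCompact.image continuous_subtype_val

variable [T2Space X]

/-- Components of compact Hausdorff spaces are quasi-components. -/
theorem exists_isOpen_isClosed_inter_disjoint {K F : Set X} (hK : IsCompact K) {x : X}
    (hx : x ∈ K) (hF : IsClosed F) (hdisj : Disjoint (connectedComponentIn K x) F) :
    ∃ O, IsOpen O ∧ x ∈ O ∧ IsClosed (K ∩ O) ∧ Disjoint (K ∩ O) F := by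
  have : CompactSpace K := isCompact_iff_compactSpace.mp hK
  rw [connectedComponentIn_eq_image hx, connectedComponent_eq_iInter_isClopen,
    disjoint_image_left, disjoint_iff_inter_eq_empty, inter_comm] at hdisj
  obtain ⟨u, hu⟩ := (hF.preimage continuous_subtype_val).isCompact.elim_finite_subfamily_closed
    _ (fun s => s.2.1.isClosed) hdisj
  have hW : IsClopen (⋂ s ∈ u, (s : Set K)) := isClopen_biInter_finset fun s _ => s.2.1
  obtain ⟨O, hO, hOW⟩ := isOpen_induced_iff.mp hW.isOpen
  have hKO : K ∩ O = Subtype.val '' ⋂ s ∈ u, (s : Set K) := by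
    rw [← hOW, Subtype.image_preimage_coe]
  refine ⟨O, hO, ?_, ?_, ?_⟩
  · have : (⟨x, hx⟩ : K) ∈ ⋂ s ∈ u, (s : Set K) := mem_iInter₂.mpr fun s _ => s.2.2
    rw [← hOW] at this
    exact this
  · rw [hKO]
    exact hK.isClosed.isClosedEmbedding_subtypeVal.isClosedMap _ hW.isClosed
  · rw [hKO, disjoint_image_left, disjoint_iff_inter_eq_empty, inter_comm]
    exact hu

/-- The boundary bumping theorem of continuum theory. -/
theorem IsContinuumThrough.connectedComponentIn_inter_frontier_nonempty {x : X} {C U : Set X}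
    (hC : IsContinuumThrough x C) (hU : IsOpen U) (hxU : x ∈ U) (hCU : ¬C ⊆ U) :
    (connectedComponentIn (C ∩ closure U) x ∩ frontier U).Nonempty := by
  by_contra h
  rw [not_nonempty_iff_eq_empty, ← disjoint_iff_inter_eq_empty] at h
  obtain ⟨O, hO, hxO, hWc, hWF⟩ := exists_isOpen_isClosed_inter_disjoint
    (hC.isCompact.inter_right isClosed_closure) ⟨hC.mem, subset_closure hxU⟩ isClosed_frontier h
  have hWU : C ∩ closure U ∩ O ⊆ U := fun y hy => by
    by_contra hyU
    exact hWF.ne_of_mem hy (hU.frontier_eq ▸ ⟨hy.1.2, hyU⟩) rfl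
  have hW : C ∩ (O ∩ U) = C ∩ closure U ∩ O :=
    Subset.antisymm (fun y hy => ⟨⟨hy.1, subset_closure hy.2.2⟩, hy.2.1⟩)
      fun y hy => ⟨hy.1.1, hy.2, hWU hy⟩
  obtain ⟨z, hzC, hzU⟩ := not_subset.mp hCU
  obtain ⟨y, hyC, hyOU, hyW⟩ := hC.isPreconnected (O ∩ U) (C ∩ closure U ∩ O)ᶜ
    (hO.inter hU) hWc.isOpen_compl
    (fun y hy => or_iff_not_imp_right.mpr fun hyW => (hW ▸ not_not.mp hyW : y ∈ C ∩ (O ∩ U)).2)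
    ⟨x, hC.mem, hxO, hxU⟩ ⟨z, hzC, fun hzW => hzU (hWU hzW)⟩
  exact hyW (hW ▸ ⟨hyC, hyOU⟩)

end Continuum

section UpperLimit

variable {X : Type*} [TopologicalSpace X]

/-- Kuratowski's upper limit of a sequence of sets. -/
def upperLimit (C : ℕ → Set X) : Set X :=
  ⋂ N, closure (⋃ i ≥ N, C i)

theorem isClosed_upperLimit (C : ℕ → Set X) : IsClosed (upperLimit C) :=
  isClosed_iInter fun _ => isClosed_closure

theorem mem_upperLimit_of_tendsto {C : ℕ → Set X} {y : ℕ → X} {y₀ : X} (hy : ∀ i, y i ∈ C i)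
    (hlim : Tendsto y atTop (𝓝 y₀)) : y₀ ∈ upperLimit C :=
  mem_iInter.mpr fun N => mem_closure_of_tendsto hlim
    (eventually_atTop.mpr ⟨N, fun i hi => mem_iUnion₂.mpr ⟨i, hi, hy i⟩⟩)

theorem upperLimit_subset_of_eventually_subset {C : ℕ → Set X} {F : Set X} (hF : IsClosed F)
    (h : ∀ᶠ i in atTop, C i ⊆ F) : upperLimit C ⊆ F := by
  obtain ⟨N, hN⟩ := eventually_atTop.mp h
  exact (iInter_subset _ N).trans (closure_minimal (iUnion₂_subset hN) hF)

theorem eventually_subset_of_upperLimit_subset [CompactSpace X] {C : ℕ → Set X} {U : Set X}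
    (hU : IsOpen U) (h : upperLimit C ⊆ U) : ∀ᶠ i in atTop, C i ⊆ U := by
  obtain ⟨N, hN⟩ := hU.isClosed_compl.isCompact.elim_directed_family_closed
    (fun N => closure (⋃ i ≥ N, C i)) (fun _ => isClosed_closure)
    (eq_empty_iff_forall_notMem.mpr fun y hy => hy.1 (h hy.2))
    (directed_of_isDirected_le fun N M hNM => closure_mono <|
      iUnion₂_subset fun i hi => subset_iUnion₂ (s := fun i (_ : i ≥ N) => C i) i (hNM.trans hi))
  refine eventually_atTop.mpr ⟨N, fun i hi y hy => ?_⟩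
  by_contra hyU
  exact (eq_empty_iff_forall_notMem.mp hN) y ⟨hyU, subset_closure (mem_iUnion₂.mpr ⟨i, hi, hy⟩)⟩

theorem isPreconnected_upperLimit [CompactSpace X] [T2Space X] {C : ℕ → Set X} {x : ℕ → X}
    {x₀ : X} (hC : ∀ i, IsPreconnected (C i)) (hx : ∀ i, x i ∈ C i)
    (hlim : Tendsto x atTop (𝓝 x₀)) : IsPreconnected (upperLimit C) := by
  have key : ∀ U V : Set X, IsOpen U → IsOpen V → Disjoint U V → upperLimit C ⊆ U ∪ V →
      x₀ ∈ U → upperLimit C ⊆ Vᶜ := by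
    intro U V hU hV hUV hL hx₀
    apply upperLimit_subset_of_eventually_subset hV.isClosed_compl
    filter_upwards [eventually_subset_of_upperLimit_subset (hU.union hV) hL,
      hlim (hU.mem_nhds hx₀)] with i hCi hxi
    exact ((hC i).subset_left_of_subset_union hU hV hUV hCi ⟨x i, hx i, hxi⟩).trans
      hUV.subset_compl_right
  rw [isPreconnected_iff_subset_of_fully_disjoint_closed (isClosed_upperLimit C)]
  intro u v hu hv hL huv
  obtain ⟨U, V, hU, hV, huU, hvV, hUV⟩ := normal_separation hu hv huv
  have hLUV : upperLimit C ⊆ U ∪ V := hL.trans (union_subset_union huU hvV)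
  rcases hL (mem_upperLimit_of_tendsto hx hlim) with hx₀ | hx₀
  · exact Or.inl fun y hy => (hL hy).resolve_right fun hyv =>
      key U V hU hV hUV hLUV (huU hx₀) hy (hvV hyv)
  · exact Or.inr fun y hy => (hL hy).resolve_left fun hyu =>
      key V U hV hU hUV.symm (union_comm U V ▸ hLUV) (hvV hx₀) hy (huU hyu)

theorem forall_mem_upperLimit_of_eventually {C : ℕ → Set X} {x : ℕ → X} {x₀ : X}
    (hlim : Tendsto x atTop (𝓝 x₀)) {F : Set (X × X)} (hF : IsClosed F)
    (h : ∀ᶠ i in atTop, ∀ y ∈ C i, (x i, y) ∈ F) : ∀ y ∈ upperLimit C, (x₀, y) ∈ F := by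
  intro y hy
  by_contra hxy
  obtain ⟨U, V, hU, hV, hx₀U, hyV, hUV⟩ := isOpen_prod_iff.mp hF.isOpen_compl x₀ y hxy
  refine upperLimit_subset_of_eventually_subset hV.isClosed_compl ?_ hy hyV
  filter_upwards [h, hlim (hU.mem_nhds hx₀U)] with i hi hxi z hz hzV
  exact hUV (mk_mem_prod hxi hzV) (hi z hz)

theorem exists_subseq_tendsto_continuum [CompactSpace X] [T2Space X] [FirstCountableTopology X]
    {x w : ℕ → X} {C : ℕ → Set X} (hC : ∀ i, IsContinuumThrough (x i) (C i))
    (hw : ∀ i, w i ∈ C i) :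
    ∃ (x₀ w₀ : X) (C₀ : Set X) (φ : ℕ → ℕ), StrictMono φ ∧ Tendsto (x ∘ φ) atTop (𝓝 x₀) ∧
      Tendsto (w ∘ φ) atTop (𝓝 w₀) ∧ IsContinuumThrough x₀ C₀ ∧ w₀ ∈ C₀ ∧
      ∀ F : Set (X × X), IsClosed F → (∀ᶠ i in atTop, ∀ y ∈ C i, (x i, y) ∈ F) →
        ∀ y ∈ C₀, (x₀, y) ∈ F := by
  obtain ⟨⟨x₀, w₀⟩, -, φ, hφ, hlim⟩ :=
    isCompact_univ.tendsto_subseq (x := fun i => (x i, w i)) fun _ => mem_univ _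
  have hx : Tendsto (x ∘ φ) atTop (𝓝 x₀) := (continuous_fst.tendsto _).comp hlim
  have hw₀ : Tendsto (w ∘ φ) atTop (𝓝 w₀) := (continuous_snd.tendsto _).comp hlim
  refine ⟨x₀, w₀, upperLimit (C ∘ φ), φ, hφ, hx, hw₀,
    ⟨mem_upperLimit_of_tendsto (fun i => (hC (φ i)).mem) hx, (isClosed_upperLimit _).isCompact,
      isPreconnected_upperLimit (fun i => (hC (φ i)).isPreconnected) (fun i => (hC (φ i)).mem)
        hx⟩,
    mem_upperLimit_of_tendsto (fun i => hw (φ i)) hw₀, fun F hF h =>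
      forall_mem_upperLimit_of_eventually hx hF (hφ.tendsto_atTop.eventually h)⟩

end UpperLimit

section MinimalSet

variable {X : Type*} [TopologicalSpace X] {f : X ≃ₜ X}

theorem IsMinimalSet.almostPeriodicPt {μ : Set X} (hμ : IsMinimalSet f μ) {m : X} (hm : m ∈ μ) :
    AlmostPeriodicPt f m := by
  have horbit : f '' fullOrbit f m = fullOrbit f m := by
    have hshift : ⇑f ∘ (fun n => iterZ f n m) = (fun n => iterZ f n m) ∘ Equiv.addRight 1 :=
      funext fun n => (iterZ_add_one f n m).symm
    rw [fullOrbit, ← range_comp, hshift, (Equiv.addRight 1).surjective.range_comp]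
  have hsub : closure (fullOrbit f m) ⊆ μ :=
    closure_minimal (range_subset_iff.mpr (iterZ_mem_of_image_eq hμ.2.2.1 hm)) hμ.2.1
  have heq := hμ.2.2.2 _ hsub ⟨m, subset_closure ⟨0, rfl⟩⟩ isClosed_closure
    (by rw [f.image_closure, horbit])
  rw [AlmostPeriodicPt, heq]
  exact hμ

theorem image_omegaLimit_iterZ (l : Filter ℤ) (hl : ∀ k : ℤ, Tendsto (· + k) l l) (s : Set X) :
    f '' omegaLimit l (iterZ f) s = omegaLimit l (iterZ f) s := by
  have hf : MapsTo f (omegaLimit l (iterZ f) s) (omegaLimit l (iterZ f) s) :=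
    (mapsTo_omegaLimit _ (ϕ' := fun t => iterZ f (t + 1)) (mapsTo_id s)
      (fun t x => (iterZ_add_one f t x).symm) f.continuous).mono_right
      (omegaLimit_subset_of_tendsto _ _ (hl 1))
  have hf' : MapsTo f.symm (omegaLimit l (iterZ f) s) (omegaLimit l (iterZ f) s) :=
    (mapsTo_omegaLimit _ (ϕ' := fun t => iterZ f (t + -1)) (mapsTo_id s)
      (fun t x => by rw [← sub_eq_add_neg, iterZ_sub_one]; rfl) f.symm.continuous).mono_right
      (omegaLimit_subset_of_tendsto _ _ (hl (-1)))
  exact hf.image_subset.antisymm fun y hy => ⟨f.symm y, hf' hy, f.apply_symm_apply y⟩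

variable [CompactSpace X]

theorem exists_isMinimalSet_subset {Y : Set X} (hY : Y.Nonempty) (hYc : IsClosed Y)
    (hYi : f '' Y = Y) : ∃ μ ⊆ Y, IsMinimalSet f μ := by
  have hchain : ∀ c ⊆ {E : Set X | E.Nonempty ∧ IsClosed E ∧ f '' E = E},
      IsChain (· ⊆ ·) c → c.Nonempty →
        ∃ lb ∈ {E : Set X | E.Nonempty ∧ IsClosed E ∧ f '' E = E}, ∀ E ∈ c, lb ⊆ E := by
    intro c hc hchain hne
    have : Nonempty c := hne.to_subtype
    refine ⟨⋂₀ c, ⟨?_, isClosed_sInter fun E hE => (hc hE).2.1, ?_⟩,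
      fun _ => sInter_subset_of_mem⟩
    · exact IsCompact.nonempty_sInter_of_directed_nonempty_isCompact_isClosed
        (fun E hE F hF => (hchain.total hE hF).elim (fun h => ⟨E, hE, subset_rfl, h⟩)
          fun h => ⟨F, hF, h, subset_rfl⟩) (fun E hE => (hc hE).1)
        (fun E hE => (hc hE).2.1.isCompact) fun E hE => (hc hE).2.1
    · rw [sInter_eq_biInter, image_iInter₂ f.bijective]
      exact iInter₂_congr fun E hE => (hc hE).2.2
  obtain ⟨μ, hμY, hμ⟩ := zorn_superset_nonempty _ hchain Y ⟨hY, hYc, hYi⟩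
  exact ⟨μ, hμY, hμ.prop.1, hμ.prop.2.1, hμ.prop.2.2,
    fun E hE hne hEc hEi => hμ.eq_of_subset ⟨hne, hEc, hEi⟩ hE⟩

/-- For `l = atTop` (resp. `atBot`) the ω-limit (resp. α-limit) set of `x` is nonempty, closed
and invariant, so it contains a minimal set. -/
theorem exists_isMinimalSet_subset_of_eventually_mem (l : Filter ℤ) [l.NeBot]
    (hl : ∀ k : ℤ, Tendsto (· + k) l l) {S : Set X} (hS : IsClosed S)
    {x : X} (hx : ∀ᶠ n in l, iterZ f n x ∈ S) : ∃ μ ⊆ S, IsMinimalSet f μ := by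
  obtain ⟨μ, hμ, hmin⟩ := exists_isMinimalSet_subset
    (nonempty_omegaLimit l (iterZ f) {x} (singleton_nonempty x))
    (isClosed_omegaLimit l (iterZ f) {x}) (image_omegaLimit_iterZ l hl {x})
  refine ⟨μ, hμ.trans ((omegaLimit_subset_closure_image2 l (iterZ f) {x} hx).trans
    (closure_minimal ?_ hS)), hmin⟩
  rintro _ ⟨n, hn, y, rfl, rfl⟩
  exact hn

end MinimalSet

section Metric

variable {X : Type*} [MetricSpace X]

theorem IsContinuumThrough.exists_subcontinuum_sphere {x : X} {C : Set X}
    (hC : IsContinuumThrough x C) {r : ℝ} (hr : 0 < r) {z : X} (hz : z ∈ C)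
    (hzr : r ≤ dist x z) :
    ∃ D ⊆ C, IsContinuumThrough x D ∧ D ⊆ closedBall x r ∧ ∃ w ∈ D, dist x w = r := by
  have hsub := connectedComponentIn_subset (C ∩ closure (ball x r)) x
  obtain ⟨w, hwD, hw⟩ := hC.connectedComponentIn_inter_frontier_nonempty isOpen_ball
    (mem_ball_self hr) fun hCr => (mem_ball'.mp (hCr hz)).not_ge hzr
  exact ⟨_, hsub.trans inter_subset_left, isContinuumThrough_connectedComponentIn
    (hC.isCompact.inter_right isClosed_closure) ⟨hC.mem, subset_closure (mem_ball_self hr)⟩,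
    hsub.trans (inter_subset_right.trans closure_ball_subset_closedBall), w, hwD,
    (dist_comm x w).trans (frontier_ball_subset_sphere hw)⟩

theorem isClosed_setOf_mem_localStable (f : X ≃ₜ X) (ε : ℝ) :
    IsClosed {p : X × X | p.2 ∈ localStable f ε p.1} := by
  have : {p : X × X | p.2 ∈ localStable f ε p.1} =
      ⋂ n : ℕ, {p | dist (iterZ f n p.1) (iterZ f n p.2) ≤ ε} := by
    ext; simp [localStable]
  rw [this]
  exact isClosed_iInter fun n => isClosed_le (by fun_prop) continuous_const

theorem isClosed_localStable (f : X ≃ₜ X) (ε : ℝ) (x : X) : IsClosed (localStable f ε x) :=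
  (isClosed_setOf_mem_localStable f ε).preimage (Continuous.prodMk_right x)

/-- The set `Σ^s_ε(x)`. -/
def stableComponent (f : X ≃ₜ X) (ε : ℝ) (x : X) : Set X :=
  connectedComponentIn (localStable f ε x ∩ closure (ball x ε)) x

theorem stableComponent_inter_frontier_nonempty {f : X ≃ₜ X} {ε : ℝ} (hε : 0 < ε) {x : X}
    {C : Set X} (hC : IsContinuumThrough x C) (hCs : C ⊆ localStable f ε x) {w : X}
    (hw : w ∈ C) (hwε : ε ≤ dist x w) :
    (stableComponent f ε x ∩ frontier (ball x ε)).Nonempty :=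
  (hC.connectedComponentIn_inter_frontier_nonempty isOpen_ball (mem_ball_self hε)
    fun hCε => (mem_ball'.mp (hCε hw)).not_ge hwε).mono
    (inter_subset_inter_left _ (connectedComponentIn_mono _ (inter_subset_inter_left _ hCs)))

def HasContinuumOfRadius (R : X → X → Prop) (r : ℝ) (x : X) : Prop :=
  ∃ C, IsContinuumThrough x C ∧ (∀ y ∈ C, R x y) ∧ ∃ w ∈ C, r ≤ dist x w

theorem isClosed_setOf_hasContinuumOfRadius [CompactSpace X] {R : X → X → Prop}
    (hR : IsClosed {p : X × X | R p.1 p.2}) (r : ℝ) :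
    IsClosed {x | HasContinuumOfRadius R r x} := by
  refine IsSeqClosed.isClosed fun q p hq hlim => ?_
  choose C hC hCR w hwC hw using hq
  obtain ⟨x₀, w₀, C₀, φ, hφ, hx, hw₀, hC₀, hw₀C, htransfer⟩ :=
    exists_subseq_tendsto_continuum hC hwC
  obtain rfl : x₀ = p := tendsto_nhds_unique hx (hlim.comp hφ.tendsto_atTop)
  exact ⟨C₀, hC₀, htransfer _ hR (Eventually.of_forall hCR), w₀, hw₀C,
    ge_of_tendsto' (hx.dist hw₀) fun i => hw (φ i)⟩

theorem exists_isMinimalSet_of_eventually_hasContinuumOfRadius [CompactSpace X] {f : X ≃ₜ X}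
    (l : Filter ℤ) [l.NeBot] (hl : ∀ k : ℤ, Tendsto (· + k) l l) {R : X → X → Prop}
    (hR : IsClosed {p : X × X | R p.1 p.2}) {r : ℝ} (hr : 0 < r) {x : X}
    (hx : ∀ᶠ n in l, HasContinuumOfRadius R r (iterZ f n x)) :
    ∃ μ, IsMinimalSet f μ ∧ ∃ m ∈ μ, ∃ C, IsContinuumThrough m C ∧ C.Nontrivial := by
  obtain ⟨μ, hμS, hμ⟩ := exists_isMinimalSet_subset_of_eventually_mem l hl
    (isClosed_setOf_hasContinuumOfRadius hR r) hx
  obtain ⟨m, hm⟩ := hμ.1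
  obtain ⟨C, hC, -, w, hwC, hw⟩ := hμS hm
  exact ⟨μ, hμ, m, hm, C, hC, nontrivial_of_mem_mem_ne hC.mem hwC (dist_pos.mp (hr.trans_le hw))⟩

theorem exists_pos_le_dist_iterZ [CompactSpace X] (f : X ≃ₜ X) (T : ℕ) {δ : ℝ} (hδ : 0 < δ) :
    ∃ ρ > 0, ∀ x y, δ ≤ dist x y → ∀ k ≤ T, ρ ≤ dist (iterZ f k x) (iterZ f k y) := by
  have hunif : ∀ k ∈ Iic T, ∀ᶠ p in uniformity X, dist (iterZ f (-k) p.1) (iterZ f (-k) p.2) < δ :=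
    fun k _ => CompactSpace.uniformContinuous_of_continuous (continuous_iterZ f (-k))
      (Metric.dist_mem_uniformity hδ)
  obtain ⟨ρ, hρ, hρδ⟩ := Metric.mem_uniformity_dist.mp ((finite_Iic T).eventually_all.mpr hunif)
  refine ⟨ρ, hρ, fun x y hxy k hk => not_lt.mp fun hlt => hxy.not_gt ?_⟩
  simpa only [iterZ_iterZ, neg_add_cancel, iterZ_zero] using hρδ hlt k hk

end Metric

section Expansion

variable {X : Type*} [MetricSpace X] {f : X ≃ₜ X} {A δ : ℝ}

def InvExpandsLocalStable (f : X ≃ₜ X) (A δ : ℝ) : Prop :=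
  ∀ x, ∀ y ∈ localStable f δ x, A * dist x y ≤ dist (iterZ f (-1) x) (iterZ f (-1) y)

theorem InvExpandsLocalStable.eq_of_forall_dist_le (h : InvExpandsLocalStable f A δ)
    (hA : 1 < A) {x y : X} (hxy : ∀ n : ℤ, dist (iterZ f n x) (iterZ f n y) ≤ δ) : x = y := by
  have hgrowth : ∀ k : ℕ, A ^ k * dist x y ≤ dist (iterZ f (-k) x) (iterZ f (-k) y) := by
    intro k
    induction k with
    | zero => simp
    | succ k ih =>
      have hstep := h (iterZ f (-k) x) (iterZ f (-k) y) fun n => by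
        simpa only [iterZ_iterZ] using hxy (n + -k)
      simp only [iterZ_iterZ, show (-1 : ℤ) + -k = -(k + 1 : ℕ) by push_cast; ring] at hstep
      calc A ^ (k + 1) * dist x y = A * (A ^ k * dist x y) := by ring
        _ ≤ A * dist (iterZ f (-k) x) (iterZ f (-k) y) := by gcongr
        _ ≤ _ := hstep
  by_contra hne
  obtain ⟨k, hk⟩ := pow_unbounded_of_one_lt (δ / dist x y) hA
  have := (div_lt_iff₀ (dist_pos.mpr hne)).mp hk
  linarith [hgrowth k, hxy (-k)]

/-- Pulling a stable continuum back by `f` stretches it, so it can be trimmed back to radius `r`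
while staying in the local stable set. -/
theorem InvExpandsLocalStable.hasContinuumOfRadius_iterZ_neg_one
    (h : InvExpandsLocalStable f A δ) (hA : 1 ≤ A) {r : ℝ} (hr : 0 < r) (hrδ : r ≤ δ) {x : X}
    (hx : HasContinuumOfRadius (fun x y => y ∈ localStable f δ x) r x) :
    HasContinuumOfRadius (fun x y => y ∈ localStable f δ x) r (iterZ f (-1) x) := by
  obtain ⟨C, hC, hCs, w, hwC, hw⟩ := hx
  have hfar : r ≤ dist (iterZ f (-1) x) (iterZ f (-1) w) :=
    calc r ≤ dist x w := hw
      _ ≤ A * dist x w := le_mul_of_one_le_left dist_nonneg hA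
      _ ≤ _ := h x w (hCs w hwC)
  obtain ⟨D, hDC, hD, hDr, w', hw'D, hw'⟩ :=
    (hC.image (continuous_iterZ f (-1))).exists_subcontinuum_sphere hr (mem_image_of_mem _ hwC)
      hfar
  refine ⟨D, hD, fun y hy n => ?_, w', hw'D, hw'.ge⟩
  obtain ⟨y₀, hy₀, rfl⟩ := hDC hy
  rcases n with _ | n
  · simpa using (mem_closedBall'.mp (hDr hy)).trans hrδ
  · simp only [iterZ_iterZ, show ((n + 1 : ℕ) : ℤ) + -1 = n by push_cast; ring]
    exact hCs y₀ hy₀ n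

variable [CompactSpace X]

/-- If some stable continuum is nondegenerate, the continua of its backward orbit never shrink,
and neither do those over its α-limit set. -/
theorem InvExpandsLocalStable.exists_isMinimalSet_of_stable_continuum
    (h : InvExpandsLocalStable f A δ) (hA : 1 ≤ A) (hδ : 0 < δ) {x : X} {C : Set X}
    (hC : IsContinuumThrough x C) (hCs : C ⊆ localStable f δ x) (hCnt : C.Nontrivial) :
    ∃ μ, IsMinimalSet f μ ∧ ∃ m ∈ μ, ∃ C, IsContinuumThrough m C ∧ C.Nontrivial := by
  obtain ⟨y, hyC, hyx⟩ := hCnt.exists_ne x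
  have hr : 0 < min (dist x y) δ := lt_min (dist_pos.mpr hyx.symm) hδ
  have horbit : ∀ k : ℕ, HasContinuumOfRadius (fun x y => y ∈ localStable f δ x)
      (min (dist x y) δ) (iterZ f (-k) x) := by
    intro k
    induction k with
    | zero => exact ⟨C, hC, hCs, y, hyC, min_le_left _ _⟩
    | succ k ih =>
      rw [show -((k + 1 : ℕ) : ℤ) = -1 + -k by push_cast; ring, ← iterZ_iterZ]
      exact h.hasContinuumOfRadius_iterZ_neg_one hA hr (min_le_right _ _) ih
  refine exists_isMinimalSet_of_eventually_hasContinuumOfRadius atBot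
    (fun k => tendsto_atBot_add_const_right _ k tendsto_id)
    (R := fun x y => y ∈ localStable f δ x) (isClosed_setOf_mem_localStable f δ) hr (x := x)
    (eventually_le_atBot 0 |>.mono fun n hn => ?_)
  obtain ⟨k, rfl⟩ := Int.exists_eq_neg_ofNat hn
  exact horbit k

end Expansion

section Unstable

variable {X : Type*} [MetricSpace X] {f : X ≃ₜ X} {A δ : ℝ}

structure IsUnstableContinuum (f : X ≃ₜ X) (δ : ℝ) (x : X) (C : Set X) : Prop where
  isContinuumThrough : IsContinuumThrough x C
  subset_localUnstable : C ⊆ localUnstable f δ x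
  exists_dist_eq : ∃ w ∈ C, dist x w = δ

theorem IsUnstableContinuum.exists_of_exit {x : X} {C : Set X}
    (hU : IsUnstableContinuum f δ x C) (hδ : 0 < δ) {s : ℕ}
    (hs : ∀ j < s, ∀ y ∈ C, dist (iterZ f j x) (iterZ f j y) ≤ δ) {y₀ : X}
    (hy₀ : y₀ ∈ C) (hexit : δ < dist (iterZ f s x) (iterZ f s y₀)) :
    ∃ D, IsUnstableContinuum f δ (iterZ f s x) D := by
  obtain ⟨D, hDC, hD, hDδ, w, hwD, hw⟩ :=
    (hU.isContinuumThrough.image (continuous_iterZ f s)).exists_subcontinuum_sphere hδ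
      (mem_image_of_mem _ hy₀) hexit.le
  refine ⟨D, ⟨hD, fun y hy n => ?_, w, hwD, hw⟩⟩
  obtain ⟨y₁, hy₁, rfl⟩ := hDC hy
  rcases Nat.eq_zero_or_pos n with rfl | hn
  · simpa using mem_closedBall'.mp (hDδ hy)
  simp only [iterZ_iterZ]
  rcases le_or_gt n s with hns | hsn
  · rw [show -(n : ℤ) + s = ((s - n : ℕ) : ℤ) by omega]
    exact hs _ (by omega) y₁ hy₁
  · rw [show -(n : ℤ) + s = -((n - s : ℕ) : ℤ) by omega]
    exact hU.subset_localUnstable hy₁ (n - s)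

theorem IsUnstableContinuum.exists_eq_iterZ {x₀ : X} {C₀ : Set X}
    (hU : IsUnstableContinuum f δ x₀ C₀) (hδ : 0 < δ) (t : ℕ) :
    ∃ x C, ∃ s : ℕ, IsUnstableContinuum f δ x C ∧
      (∀ j < s, ∀ y ∈ C, dist (iterZ f j x) (iterZ f j y) ≤ δ) ∧ iterZ f t x₀ = iterZ f s x := by
  induction t with
  | zero => exact ⟨x₀, C₀, 0, hU, by simp, rfl⟩
  | succ t ih =>
    obtain ⟨x, C, s, hU, hs, ht⟩ := ih
    have hsucc : iterZ f (t + 1 : ℕ) x₀ = iterZ f 1 (iterZ f s x) := by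
      rw [← ht, iterZ_iterZ, Nat.cast_succ, add_comm]
    by_cases hexit : ∃ y ∈ C, δ < dist (iterZ f s x) (iterZ f s y)
    · obtain ⟨y₀, hy₀, hy₀s⟩ := hexit
      obtain ⟨D, hD⟩ := hU.exists_of_exit hδ hs hy₀ hy₀s
      refine ⟨iterZ f s x, D, 1, hD, fun j hj y hy => ?_, hsucc⟩
      obtain rfl : j = 0 := Nat.lt_one_iff.mp hj
      simpa using hD.subset_localUnstable hy 0
    · simp only [not_exists, not_and, not_lt] at hexit
      refine ⟨x, C, s + 1, hU, fun j hj => ?_, ?_⟩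
      · rcases (Nat.lt_succ_iff.mp hj).lt_or_eq with hjs | rfl
        exacts [hs j hjs, hexit]
      · rw [hsucc, iterZ_iterZ, Nat.cast_succ, add_comm]

/-- Push a small piece of `K` near `a` forward to its first exit time from the `δ`-band, which is
late because the piece is small. -/
theorem exists_far_continuum_with_backward_band (hδ : 0 < δ)
    (hstable : ∀ x C, IsContinuumThrough x C → C ⊆ localStable f δ x → C.Subsingleton)
    {a : X} {K : Set X} (hK : IsContinuumThrough a K) (hKnt : K.Nontrivial) (n₀ : ℕ) :
    ∃ x B b, IsContinuumThrough x B ∧ b ∈ B ∧ δ < dist x b ∧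
      ∀ k : ℕ, 0 < k → k ≤ n₀ → ∀ y ∈ B, dist (iterZ f (-k) x) (iterZ f (-k) y) ≤ δ := by
  classical
  obtain ⟨z, hzK, hza⟩ := hKnt.exists_ne a
  have hnear : ∀ᶠ y in 𝓝 a, ∀ j ∈ Iic n₀, dist (iterZ f j a) (iterZ f j y) < δ :=
    (finite_Iic n₀).eventually_all.mpr fun j _ =>
      ((continuous_iterZ f j).tendsto a).eventually (ball_mem_nhds _ hδ) |>.mono
        fun y hy => mem_ball'.mp hy
  obtain ⟨ε, hε, hball⟩ := Metric.eventually_nhds_iff_ball.mp hnear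
  have hr : 0 < min (ε / 2) (dist a z) := lt_min (half_pos hε) (dist_pos.mpr hza.symm)
  obtain ⟨P, -, hP, hPr, w, hwP, hw⟩ :=
    hK.exists_subcontinuum_sphere hr hzK (min_le_right _ _)
  have hPε : P ⊆ ball a ε := fun y hy => mem_ball'.mpr <|
    (mem_closedBall'.mp (hPr hy)).trans_lt ((min_le_left _ _).trans_lt (half_lt_self hε))
  have hexit : ∃ n : ℕ, ∃ y ∈ P, δ < dist (iterZ f n a) (iterZ f n y) := by
    by_contra! hno
    have haw : a = w := hstable a P hP (fun y hy n => hno n y hy) hP.mem hwP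
    rw [← haw, dist_self] at hw
    exact hr.ne hw
  obtain ⟨b, hbP, hb⟩ := Nat.find_spec hexit
  have hbefore : ∀ j < Nat.find hexit, ∀ y ∈ P, dist (iterZ f j a) (iterZ f j y) ≤ δ :=
    fun j hj y hy => not_lt.mp fun hjy => Nat.find_min hexit hj ⟨y, hy, hjy⟩
  have hN : n₀ < Nat.find hexit := not_le.mp fun hN => (hball _ (hPε hbP) _ hN).not_gt hb
  refine ⟨_, _, _, hP.image (continuous_iterZ f (Nat.find hexit)), mem_image_of_mem _ hbP, hb,
    fun k hk hkn y hy => ?_⟩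
  obtain ⟨y₀, hy₀, rfl⟩ := hy
  simp only [iterZ_iterZ]
  rw [show -(k : ℤ) + (Nat.find hexit : ℕ) = ((Nat.find hexit - k : ℕ) : ℤ) by omega]
  exact hbefore _ (by omega) y₀ hy₀

variable [CompactSpace X]

/-- If all stable continua are degenerate, a nondegenerate continuum is stretched beyond `δ` by
forward iteration; pushing ever smaller pieces of it forward to their exit time and passing to a
limit yields an unstable continuum. -/
theorem exists_isUnstableContinuum (hδ : 0 < δ)
    (hstable : ∀ x C, IsContinuumThrough x C → C ⊆ localStable f δ x → C.Subsingleton)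
    {a : X} {K : Set X} (hK : IsContinuumThrough a K) (hKnt : K.Nontrivial) :
    ∃ x C, IsUnstableContinuum f δ x C := by
  choose x B b hB hbB hb hband using exists_far_continuum_with_backward_band hδ hstable hK hKnt
  obtain ⟨x₀, b₀, C₀, φ, -, hx, hb₀, hC₀, hb₀C, htransfer⟩ :=
    exists_subseq_tendsto_continuum hB hbB
  obtain ⟨D, hDC, hD, hDδ, w, hwD, hw⟩ :=
    hC₀.exists_subcontinuum_sphere hδ hb₀C (ge_of_tendsto' (hx.dist hb₀) fun i => (hb (φ i)).le)
  refine ⟨x₀, D, hD, fun y hy k => ?_, w, hwD, hw⟩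
  rcases Nat.eq_zero_or_pos k with rfl | hk
  · simpa using mem_closedBall'.mp (hDδ hy)
  exact htransfer {p | dist (iterZ f (-k) p.1) (iterZ f (-k) p.2) ≤ δ}
    (isClosed_le (by fun_prop) continuous_const)
    (eventually_atTop.mpr ⟨k, fun i hi => hband i k hk hi⟩) y (hDC hy)

/-- A limit of unstable continua staying in the forward `δ`-band for longer and longer would lie
in the two-sided `δ`-band, which expansivity forbids. -/
theorem InvExpandsLocalStable.exists_exit_bound (h : InvExpandsLocalStable f A δ) (hA : 1 < A)
    (hδ : 0 < δ) : ∃ T : ℕ, ∀ x C, IsUnstableContinuum f δ x C →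
      ∃ k ≤ T, ∃ y ∈ C, δ < dist (iterZ f k x) (iterZ f k y) := by
  by_contra! hT
  choose x C hU hband using hT
  choose w hwC hw using fun T => (hU T).exists_dist_eq
  obtain ⟨x₀, w₀, C₀, φ, hφ, hx, hw₀, -, hw₀C, htransfer⟩ :=
    exists_subseq_tendsto_continuum (fun T => (hU T).isContinuumThrough) hwC
  have hclosed (n : ℤ) : IsClosed {p : X × X | dist (iterZ f n p.1) (iterZ f n p.2) ≤ δ} :=
    isClosed_le (by fun_prop) continuous_const
  have hfwd (n : ℕ) : dist (iterZ f n x₀) (iterZ f n w₀) ≤ δ :=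
    htransfer _ (hclosed n) (eventually_atTop.mpr ⟨n, fun T hT y hy => hband T n hT y hy⟩) w₀ hw₀C
  have hbwd (n : ℕ) : dist (iterZ f (-n) x₀) (iterZ f (-n) w₀) ≤ δ :=
    htransfer _ (hclosed (-n)) (Eventually.of_forall fun T y hy => (hU T).subset_localUnstable hy n)
      w₀ hw₀C
  have heq : x₀ = w₀ := h.eq_of_forall_dist_le hA fun n => by
    rcases n.eq_nat_or_neg with ⟨n, rfl | rfl⟩
    exacts [hfwd n, hbwd n]
  have hdist : dist x₀ w₀ = δ :=
    tendsto_nhds_unique (hx.dist hw₀) (by simp only [Function.comp_def, hw, tendsto_const_nhds])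
  rw [heq, dist_self] at hdist
  exact hδ.ne hdist

/-- Following the forward orbit and trimming at each exit from the `δ`-band, every orbit point
is an image, after a bounded time, of the base point of an unstable continuum of radius `δ`; so
it carries a continuum of a fixed radius, and so does every point of the ω-limit set. -/
theorem InvExpandsLocalStable.exists_isMinimalSet_of_unstable_continuum
    (h : InvExpandsLocalStable f A δ) (hA : 1 < A) (hδ : 0 < δ) {x₀ : X} {C₀ : Set X}
    (hU₀ : IsUnstableContinuum f δ x₀ C₀) :
    ∃ μ, IsMinimalSet f μ ∧ ∃ m ∈ μ, ∃ C, IsContinuumThrough m C ∧ C.Nontrivial := by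
  obtain ⟨T, hT⟩ := h.exists_exit_bound hA hδ
  obtain ⟨ρ, hρ, hsep⟩ := exists_pos_le_dist_iterZ f T hδ
  refine exists_isMinimalSet_of_eventually_hasContinuumOfRadius atTop
    (fun k => tendsto_atTop_add_const_right _ k tendsto_id) (R := fun _ _ => True)
    isClosed_univ hρ (x := x₀)
    (eventually_ge_atTop 0 |>.mono fun n hn => ?_)
  lift n to ℕ using hn
  obtain ⟨x, C, s, hU, hs, heq⟩ := hU₀.exists_eq_iterZ hδ n
  obtain ⟨k, hkT, y, hyC, hy⟩ := hT x C hU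
  have hsk : s ≤ k := not_lt.mp fun hks => (hs k hks y hyC).not_gt hy
  obtain ⟨w, hwC, hw⟩ := hU.exists_dist_eq
  exact heq ▸ ⟨_, hU.isContinuumThrough.image (continuous_iterZ f s), fun _ _ => trivial, _,
    mem_image_of_mem _ hwC, hsep x w hw.ge s (hsk.trans hkT)⟩

end Unstable

section Main

variable {X : Type*} [MetricSpace X] [CompactSpace X] {f : X ≃ₜ X} {A δ : ℝ}

theorem InvExpandsLocalStable.exists_isMinimalSet_nontrivial_continuum
    (h : InvExpandsLocalStable f A δ) (hA : 1 < A) (hδ : 0 < δ) {a : X} {K : Set X}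
    (hK : IsContinuumThrough a K) (hKnt : K.Nontrivial) :
    ∃ μ, IsMinimalSet f μ ∧ ∃ m ∈ μ, ∃ C, IsContinuumThrough m C ∧ C.Nontrivial := by
  by_cases hstable : ∃ x C, IsContinuumThrough x C ∧ C ⊆ localStable f δ x ∧ C.Nontrivial
  · obtain ⟨x, C, hC, hCs, hCnt⟩ := hstable
    exact h.exists_isMinimalSet_of_stable_continuum hA.le hδ hC hCs hCnt
  · obtain ⟨x, C, hU⟩ := exists_isUnstableContinuum hδ
      (fun x C hC hCs => not_nontrivial_iff.mp fun hCnt => hstable ⟨x, C, hC, hCs, hCnt⟩) hK hKnt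
    exact h.exists_isMinimalSet_of_unstable_continuum hA hδ hU

/-- Push a nondegenerate continuum through a point of a minimal set along the orbit so that it
becomes as wide as possible, measured uniformly along the whole orbit; a limit continuum then
lies in the local stable set of that width and touches its sphere. -/
theorem IsMinimalSet.exists_stable_continuum {μ : Set X} (hμ : IsMinimalSet f μ) {m : X}
    (hm : m ∈ μ) {C : Set X} (hC : IsContinuumThrough m C) (hCnt : C.Nontrivial) :
    ∃ m' ∈ μ, ∃ β > 0, ∃ C', IsContinuumThrough m' C' ∧ C' ⊆ localStable f β m' ∧
      ∃ w ∈ C', dist m' w = β := by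
  set S : Set ℝ := {r | ∃ k : ℤ, ∃ y ∈ C, dist (iterZ f k m) (iterZ f k y) = r}
  have hbdd : BddAbove S := ⟨diam (univ : Set X), by
    rintro _ ⟨k, y, -, rfl⟩
    exact dist_le_diam_of_mem isCompact_univ.isBounded (mem_univ _) (mem_univ _)⟩
  obtain ⟨w, hwC, hwm⟩ := hCnt.exists_ne m
  have hβ : 0 < sSup S := (dist_pos.mpr hwm.symm).trans_le (le_csSup hbdd ⟨0, w, hwC, rfl⟩)
  obtain ⟨u, -, hu, huS⟩ := exists_seq_tendsto_sSup (S := S) ⟨_, 0, w, hwC, rfl⟩ hbdd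
  choose k y hyC hky using huS
  obtain ⟨m', w', C', φ, hφ, hm', hw', hC', hw'C', htransfer⟩ :=
    exists_subseq_tendsto_continuum (x := fun i => iterZ f (k i) m)
      (fun i => hC.image (continuous_iterZ f (k i))) fun i => mem_image_of_mem _ (hyC i)
  refine ⟨m', hμ.2.1.mem_of_tendsto hm'
    (Eventually.of_forall fun i => iterZ_mem_of_image_eq hμ.2.2.1 hm _), sSup S, hβ, C', hC',
    fun z hz n => htransfer {p | dist (iterZ f n p.1) (iterZ f n p.2) ≤ sSup S}
      (isClosed_le (by fun_prop) continuous_const) (Eventually.of_forall ?_) z hz,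
    w', hw'C', tendsto_nhds_unique (hm'.dist hw') ?_⟩
  · rintro i _ ⟨z, hz, rfl⟩
    show dist (iterZ f n (iterZ f (k i) m)) (iterZ f n (iterZ f (k i) z)) ≤ sSup S
    rw [iterZ_iterZ, iterZ_iterZ]
    exact le_csSup hbdd ⟨_, z, hz, rfl⟩
  · simpa only [Function.comp_def, hky] using hu.comp hφ.tendsto_atTop

theorem InvExpandsLocalStable.exists_almostPeriodicPt_stableComponent_inter_frontier_nonempty
    (h : InvExpandsLocalStable f A δ) (hA : 1 < A) (hδ : 0 < δ) {a : X} {K : Set X}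
    (hK : IsContinuumThrough a K) (hKnt : K.Nontrivial) :
    ∃ x, AlmostPeriodicPt f x ∧
      ∃ ε > 0, (stableComponent f ε x ∩ frontier (ball x ε)).Nonempty := by
  obtain ⟨μ, hμ, m, hm, C, hC, hCnt⟩ := h.exists_isMinimalSet_nontrivial_continuum hA hδ hK hKnt
  obtain ⟨m', hm', β, hβ, C', hC', hC's, w, hwC', hw⟩ := hμ.exists_stable_continuum hm hC hCnt
  exact ⟨m', hμ.almostPeriodicPt hm', β, hβ,
    stableComponent_inter_frontier_nonempty hβ hC' hC's hwC' hw.ge⟩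

end Main

/-- Its topology is definitionally the given one, so `X` can be re-metrized by `dD`. -/
abbrev IsCompatibleMetric.toMetricSpace {X : Type*} [TopologicalSpace X] {dD : X → X → ℝ}
    (hD : IsCompatibleMetric dD) : MetricSpace X :=
  .ofDistTopology dD (fun x => (hD.1 x x).2 rfl) hD.2.1 hD.2.2.1 hD.2.2.2 fun x y => (hD.1 x y).1

theorem stmt_17_general {X : Type*} [MetricSpace X] [CompactSpace X] (f : X ≃ₜ X)
    (A : ℝ) (hA : 2 ≤ A) (dD : X → X → ℝ)
    (hD : IsCompatibleMetric dD) (δ : ℝ) (hδ : 0 < δ)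
    (hhyp : ∀ x y : X,
      (∀ n : ℕ, dD (iterZ f n x) (iterZ f n y) ≤ δ) →
      A * dD x y ≤ dD (iterZ f (-1) x) (iterZ f (-1) y) ∧
      ∀ n : ℕ, dD (iterZ f n x) (iterZ f n y) ≤ (A ^ n)⁻¹ * dD x y)
    (a : X) (ε₁ : ℝ) (hε₁ : 0 < ε₁)
    (ha : (connectedComponentIn
        ({y : X | ∀ n : ℕ, dD (iterZ f n a) (iterZ f n y) ≤ ε₁} ∩
          closure {y : X | dD a y < ε₁}) a ∩
        frontier {y : X | dD a y < ε₁}).Nonempty) :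
    ∃ xs : X, AlmostPeriodicPt f xs ∧ ∃ ε₂ > (0 : ℝ),
      (connectedComponentIn
        ({y : X | ∀ n : ℕ, dD (iterZ f n xs) (iterZ f n y) ≤ ε₂} ∩
          closure {y : X | dD xs y < ε₂}) xs ∩
        frontier {y : X | dD xs y < ε₂}).Nonempty := by
  let _ : MetricSpace X := hD.toMetricSpace
  have hball (x : X) (ε : ℝ) : {y | dD x y < ε} = ball x ε := by
    ext y
    exact (mem_ball' : y ∈ ball x ε ↔ _).symm
  simp only [hball] at ha ⊢
  obtain ⟨z, hzK, hz⟩ := ha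
  have hK : IsContinuumThrough a (stableComponent f ε₁ a) :=
    isContinuumThrough_connectedComponentIn
      ((isClosed_localStable f ε₁ a).inter isClosed_closure).isCompact
      ⟨fun n => by simpa using hε₁.le, subset_closure (mem_ball_self hε₁)⟩
  have hza : z ≠ a := fun hza => hε₁.ne (by simpa [hza] using frontier_ball_subset_sphere hz)
  exact InvExpandsLocalStable.exists_almostPeriodicPt_stableComponent_inter_frontier_nonempty
    (fun x y hy => (hhyp x y hy).1) (by linarith) hδ hK
    (nontrivial_of_mem_mem_ne hK.mem hzK hza.symm)

/-- Suppose `f` is expansive and, for some `A ≥ 2`, some compatible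
metric `D` and some `δ > 0`, every `y ∈ W^s_δ(x, D)` satisfies
`D(f⁻¹x, f⁻¹y) ≥ A·D(x,y)` and `D(fⁿx, fⁿy) ≤ A^{-n}·D(x,y)` for all `n ≥ 0`.
If the component `Σ^s_{ε₁}(a, D)` of `W^s_{ε₁}(a, D) ∩ cl B_{ε₁}(a, D)` containing `a`
meets `∂B_{ε₁}(a, D)` for some `a` and `ε₁ > 0`, then there are an almost periodic point
`x*` and `ε₂ > 0` such that `Σ^s_{ε₂}(x*, D)` meets `∂B_{ε₂}(x*, D)`. -/
theorem stmt_17 {X : Type*} [MetricSpace X] [CompactSpace X] (f : X ≃ₜ X)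
    (hexp : Expansive f) (A : ℝ) (hA : 2 ≤ A) (dD : X → X → ℝ)
    (hD : IsCompatibleMetric dD) (δ : ℝ) (hδ : 0 < δ)
    (hhyp : ∀ x y : X,
      (∀ n : ℕ, dD (iterZ f n x) (iterZ f n y) ≤ δ) →
      A * dD x y ≤ dD (iterZ f (-1) x) (iterZ f (-1) y) ∧
      ∀ n : ℕ, dD (iterZ f n x) (iterZ f n y) ≤ (A ^ n)⁻¹ * dD x y)
    (a : X) (ε₁ : ℝ) (hε₁ : 0 < ε₁)
    (ha : (connectedComponentIn
        ({y : X | ∀ n : ℕ, dD (iterZ f n a) (iterZ f n y) ≤ ε₁} ∩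
          closure {y : X | dD a y < ε₁}) a ∩
        frontier {y : X | dD a y < ε₁}).Nonempty) :
    ∃ xs : X, AlmostPeriodicPt f xs ∧ ∃ ε₂ > (0 : ℝ),
      (connectedComponentIn
        ({y : X | ∀ n : ℕ, dD (iterZ f n xs) (iterZ f n y) ≤ ε₂} ∩
          closure {y : X | dD xs y < ε₂}) xs ∩
        frontier {y : X | dD xs y < ε₂}).Nonempty :=
  stmt_17_general f A hA dD hD δ hδ hhyp a ε₁ hε₁ ha
end

section
/- Define ξ ∈ {0,1}^ℤ by ξ(n) = 0 for all n < 0 and, on the nonnegative coordinates, ξ begins with each of the words ω_n defined by ω₁ = 1 and ω_{n+1} = ω_n 0ⁿ ω_n (ω_n followed by n zeros followed by ω_n). Let T be the left shift on {0,1}^ℤ and let X be the closure of the T-orbit of ξ. Then the subshift (X, T) is topologically transitive and not minimal (the fixed point 0^∞ = ⋯000⋯ lies in X), yet every point of X is recurrent (positively or negatively recurrent). -/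
open Filter Topology

/-- The words `ω_{k+1}` over `{0,1}` (with `false = 0`, `true = 1`):
`wordW 0 = ω₁ = 1` and `wordW (k+1) = ω_{k+2} = ω_{k+1} 0^{k+1} ω_{k+1}`. -/
def wordW : ℕ → List Bool
  | 0 => [true]
  | k + 1 => wordW k ++ List.replicate (k + 1) false ++ wordW k

/-!
`0^∞` lies in the orbit closure of `ξ` (as the limit of `T^{-m} ξ`) and is a fixed point different
from `ξ`, so the orbit closure is transitive but not minimal.

For recurrence let `c_n = |wordW n| + n + 1`, the offset of the second copy of `wordW n` in
`wordW (n + 1)`. On `P_n = [-(n+1), c_n)` the sequence `ξ` reads `0^(n+1) (wordW n) 0^(n+1)`, and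
this pattern reappears at `c_n`. Up to its two extreme cells, `P_(n+1)` is covered by `P_n` and
`c_n + P_n`, which overlap in `n + 1` cells; so by induction on `n > w` every window of `w + 1`
cells inside `P_n` recurs in `ξ` at a nonzero shift of size at most `c_w` (at the base level, by
jumping to the other copy of `wordW w`). A point `x` of the orbit
closure agrees with a shift of `ξ` on any finite window, so it inherits these returns and lies in
the closure of `{T^n x : n ≠ 0}`. In a first-countable T1 space such a point is positively or
negatively recurrent: this is clear for periodic points, and otherwise `x` is a cluster point of
its orbit along the cofinite filter of `ℤ`, which is `atBot ⊔ atTop`.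
-/

section Recurrence

variable {X : Type*} [TopologicalSpace X] {f : X ≃ₜ X} {x : X}

theorem exists_strictMono_pos_tendsto_of_mapClusterPt [FirstCountableTopology X] {u : ℕ → X}
    {y : X} (h : MapClusterPt y atTop u) :
    ∃ n : ℕ → ℕ, StrictMono n ∧ 0 < n 0 ∧ Tendsto (u ∘ n) atTop (𝓝 y) := by
  obtain ⟨ψ, hψ, hlim⟩ := h.tendsto_subseq
  exact ⟨ψ ∘ Nat.succ, hψ.comp fun _ _ => Nat.succ_lt_succ,
    (Nat.zero_le _).trans_lt (hψ Nat.one_pos), (tendsto_add_atTop_iff_nat 1).mpr hlim⟩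

theorem recurrentPt_of_mapClusterPt_cofinite [FirstCountableTopology X]
    (h : MapClusterPt x cofinite fun n : ℤ => iterZ f n x) : RecurrentPt f x := by
  rw [MapClusterPt, Int.cofinite_eq, map_sup, clusterPt_sup] at h
  rcases h with hbot | htop
  · right
    rw [← map_neg_atTop, ← Nat.map_cast_int_atTop, map_map] at hbot
    exact exists_strictMono_pos_tendsto_of_mapClusterPt hbot
  · left
    rw [← Nat.map_cast_int_atTop] at htop
    exact exists_strictMono_pos_tendsto_of_mapClusterPt htop

theorem iterZ_mul_apply_of_apply_eq_self {p : ℤ} (hp : iterZ f p x = x) (k : ℤ) :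
    iterZ f (p * k) x = x := by
  rw [iterZ, zpow_mul]
  exact Equiv.Perm.zpow_apply_eq_self_of_apply_eq_self hp k

theorem mapClusterPt_cofinite_of_mem_closure [T1Space X]
    (h : x ∈ closure ((fun n : ℤ => iterZ f n x) '' {n | n ≠ 0})) :
    MapClusterPt x cofinite fun n : ℤ => iterZ f n x := by
  rw [mapClusterPt_iff_frequently]
  intro s hs
  rw [frequently_cofinite_iff_infinite]
  by_cases hper : ∃ p ≠ 0, iterZ f p x = x
  · obtain ⟨p, hp0, hp⟩ := hper
    refine (Set.infinite_range_of_injective (mul_right_injective₀ hp0)).mono ?_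
    rintro _ ⟨k, rfl⟩
    simpa only [Set.mem_ofPred_eq, iterZ_mul_apply_of_apply_eq_self hp k] using
      mem_of_mem_nhds hs
  · push Not at hper
    intro hfin
    set F := (fun n : ℤ => iterZ f n x) '' ({n | iterZ f n x ∈ s} \ {0})
    have hF : Fᶜ ∈ 𝓝 x := by
      refine (hfin.sdiff.image _).isClosed.compl_mem_nhds ?_
      rintro ⟨n, ⟨-, hn⟩, hnx⟩
      exact hper n hn hnx
    obtain ⟨_, ⟨hys, hyF⟩, n, hn, rfl⟩ := mem_closure_iff_nhds.mp h _ (inter_mem hs hF)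
    exact hyF ⟨n, ⟨hys, hn⟩, rfl⟩

theorem recurrentPt_of_mem_closure [T1Space X] [FirstCountableTopology X]
    (h : x ∈ closure ((fun n : ℤ => iterZ f n x) '' {n | n ≠ 0})) : RecurrentPt f x :=
  recurrentPt_of_mapClusterPt_cofinite (mapClusterPt_cofinite_of_mem_closure h)

end Recurrence

section Shift

variable {F : Type*} [TopologicalSpace F]

theorem iterZ_shiftH_apply (q : ℤ) (x : ℤ → F) (n : ℤ) :
    iterZ (shiftH F) q x n = x (n + q) := by
  induction q using Int.induction_on generalizing x n with
  | zero => simp [iterZ]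
  | succ k ih =>
    rw [iterZ, zpow_add_one, Equiv.Perm.mul_apply, ← iterZ, ih]
    exact congrArg x (by ring)
  | pred k ih =>
    rw [iterZ, zpow_sub_one, Equiv.Perm.mul_apply, ← iterZ, ih]
    exact congrArg x (by ring)

theorem fullOrbit_shiftH_const (a : F) : fullOrbit (shiftH F) (fun _ => a) = {fun _ => a} := by
  have : (fun n : ℤ => iterZ (shiftH F) n fun _ : ℤ => a) = fun _ _ => a := by
    funext n m; exact iterZ_shiftH_apply n _ m
  rw [fullOrbit, this, Set.range_const]

theorem tendsto_iterZ_shiftH_neg_of_eventually_const {ξ : ℤ → F} {a : F}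
    (h : ∀ n < 0, ξ n = a) :
    Tendsto (fun m : ℕ => iterZ (shiftH F) (-m) ξ) atTop (𝓝 fun _ => a) := by
  refine tendsto_pi_nhds.mpr fun n => tendsto_const_nhds.congr' ?_
  filter_upwards [eventually_gt_atTop n.toNat] with m hm
  rw [iterZ_shiftH_apply, h _ (by omega)]

theorem recurrentPt_shiftH_of_forall_exists_shift [T1Space F] [FirstCountableTopology F]
    {x : ℤ → F} (h : ∀ r : ℕ, ∃ t ≠ (0 : ℤ), ∀ j : ℤ, |j| ≤ r → x (j + t) = x j) :
    RecurrentPt (shiftH F) x := by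
  choose t ht0 ht using h
  refine recurrentPt_of_mem_closure (mem_closure_of_tendsto (b := atTop) (f := fun r =>
    iterZ (shiftH F) (t r) x) ?_ (.of_forall fun r => ⟨t r, ht0 r, rfl⟩))
  refine tendsto_pi_nhds.mpr fun j => tendsto_const_nhds.congr' ?_
  filter_upwards [eventually_ge_atTop j.natAbs] with r hr
  rw [iterZ_shiftH_apply, ht r j (by rw [Int.abs_eq_natAbs]; exact_mod_cast hr)]

theorem exists_eq_shift_of_mem_closure_fullOrbit [DiscreteTopology F] {x ξ : ℤ → F}
    (hx : x ∈ closure (fullOrbit (shiftH F) ξ)) (r : ℤ) :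
    ∃ q : ℤ, ∀ j : ℤ, |j| ≤ r → x j = ξ (j + q) := by
  have hU : IsOpen ((Set.Icc (-r) r).pi fun j => {x j}) :=
    isOpen_set_pi (Set.finite_Icc _ _) fun _ _ => isOpen_discrete _
  obtain ⟨_, hy, q, rfl⟩ := mem_closure_iff.mp hx _ hU (Set.mem_pi.mpr fun _ _ => rfl)
  refine ⟨q, fun j hj => ?_⟩
  rw [← iterZ_shiftH_apply q ξ j]
  exact (hy j (Set.mem_Icc.mpr (abs_le.mp hj))).symm

end Shift

def wordLen (n : ℕ) : ℕ := (wordW n).length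

theorem wordLen_succ (n : ℕ) : wordLen (n + 1) = wordLen n + (n + 1) + wordLen n := by
  simp only [wordLen, wordW, List.length_append, List.length_replicate]

theorem getD_wordW_succ_of_le (n : ℕ) {i : ℕ} (h : wordLen n + (n + 1) ≤ i) :
    (wordW (n + 1)).getD i false = (wordW n).getD (i - (wordLen n + (n + 1))) false := by
  rw [wordW, List.getD_append_right _ _ _ _ (by simpa [wordLen] using h)]
  simp [wordLen]

theorem getD_wordW_succ_of_mem_gap (n : ℕ) {i : ℕ} (h₀ : wordLen n ≤ i)
    (h₁ : i < wordLen n + (n + 1)) : (wordW (n + 1)).getD i false = false := by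
  rw [wordW, List.getD_append _ _ _ _ (by simpa [wordLen] using h₁),
    List.getD_append_right _ _ _ _ (by simpa [wordLen] using h₀)]
  exact List.getD_replicate _ (by simp only [wordLen] at h₁; omega)

def copyShift (n : ℕ) : ℤ := wordLen n + n + 1

theorem copyShift_succ (n : ℕ) : copyShift (n + 1) = 2 * copyShift n + 1 := by
  simp only [copyShift, wordLen_succ]; push_cast; ring

theorem one_le_copyShift (n : ℕ) : 1 ≤ copyShift n := by
  simp only [copyShift]; omega

def paddedRange (n : ℕ) : Set ℤ := Set.Ico (-(n + 1 : ℤ)) (copyShift n)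

theorem paddedRange_subset_succ (n : ℕ) : paddedRange n ⊆ paddedRange (n + 1) := by
  have := copyShift_succ n
  have := one_le_copyShift n
  exact Set.Ico_subset_Ico (by push_cast; omega) (by omega)

def HasReturnIn {α : Type*} (x : ℤ → α) (B : ℤ) (S : Set ℤ) (a : ℤ) (w : ℕ) : Prop :=
  ∃ t : ℤ, t ≠ 0 ∧ |t| ≤ B ∧ ∀ j ∈ Set.Icc a (a + w), j + t ∈ S ∧ x (j + t) = x j

theorem HasReturnIn.mono {α : Type*} {x : ℤ → α} {B : ℤ} {S S' : Set ℤ} {a : ℤ} {w : ℕ}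
    (h : HasReturnIn x B S a w) (hS : S ⊆ S') : HasReturnIn x B S' a w := by
  obtain ⟨t, ht0, htB, ht⟩ := h
  exact ⟨t, ht0, htB, fun j hj => ⟨hS (ht j hj).1, (ht j hj).2⟩⟩

section OmegaSequence

variable {ξ : ℤ → Bool}
  (hneg : ∀ n : ℤ, n < 0 → ξ n = false)
  (hpre : ∀ k : ℕ, ∀ i : ℕ, i < (wordW k).length → ξ (i : ℤ) = (wordW k).getD i false)

include hpre

theorem xi_copyShift_add_of_lt (n : ℕ) {i : ℤ} (h₀ : 0 ≤ i) (h₁ : i < wordLen n) :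
    ξ (copyShift n + i) = ξ i := by
  lift i to ℕ using h₀
  have hi : i < wordLen n := by exact_mod_cast h₁
  have hlen : wordLen n + (n + 1) + i < wordLen (n + 1) := by rw [wordLen_succ]; omega
  have hcast : copyShift n + i = ((wordLen n + (n + 1) + i : ℕ) : ℤ) := by
    simp only [copyShift]; push_cast; ring
  rw [hcast, hpre _ _ hlen, hpre n i hi, getD_wordW_succ_of_le n (by omega)]
  congr 1; omega

theorem xi_eq_false_of_mem_gap (n : ℕ) {i : ℤ} (h₀ : wordLen n ≤ i) (h₁ : i < copyShift n) :
    ξ i = false := by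
  lift i to ℕ using (Int.natCast_nonneg _).trans h₀
  simp only [copyShift] at h₁
  have hlen : i < wordLen (n + 1) := by rw [wordLen_succ]; omega
  rw [hpre _ _ hlen, getD_wordW_succ_of_mem_gap n (by omega) (by omega)]

include hneg

theorem xi_copyShift_add (n : ℕ) {i : ℤ} (hi : i ∈ paddedRange n) :
    ξ (copyShift n + i) = ξ i := by
  obtain ⟨h₀, h₁⟩ := hi
  have hc : copyShift n = wordLen n + n + 1 := rfl
  have hc' := copyShift_succ n
  have hL : (wordLen (n + 1) : ℤ) = copyShift n + wordLen n := by
    rw [wordLen_succ, hc]; push_cast; ring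
  rcases lt_or_ge i 0 with hi_neg | hi_nonneg
  · rw [hneg i hi_neg, xi_eq_false_of_mem_gap hpre n (by omega) (by omega)]
  rcases lt_or_ge i (wordLen n) with hword | hgap
  · exact xi_copyShift_add_of_lt hpre n hi_nonneg hword
  · rw [xi_eq_false_of_mem_gap hpre n hgap h₁,
      xi_eq_false_of_mem_gap hpre (n + 1) (by omega) (by omega)]

theorem HasReturnIn.copyShift_add {n w : ℕ} {B a : ℤ}
    (h₀ : -(n + 1 : ℤ) ≤ a) (h₁ : a + w < copyShift n)
    (h : HasReturnIn ξ B (paddedRange n) a w) :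
    HasReturnIn ξ B (paddedRange (n + 1)) (copyShift n + a) w := by
  obtain ⟨t, ht0, htB, ht⟩ := h
  refine ⟨t, ht0, htB, fun j ⟨hj₀, hj₁⟩ => ?_⟩
  obtain ⟨hmem, heq⟩ := ht (j - copyShift n) ⟨by omega, by omega⟩
  obtain ⟨hmem₀, hmem₁⟩ := hmem
  have hc := copyShift_succ n
  have hc₁ := one_le_copyShift n
  have hj : j - copyShift n ∈ paddedRange n := ⟨by omega, by omega⟩
  refine ⟨⟨by push_cast; omega, by omega⟩, ?_⟩
  calc ξ (j + t) = ξ (copyShift n + (j - copyShift n + t)) := by ring_nf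
    _ = ξ (j - copyShift n) := by rw [xi_copyShift_add hneg hpre n ⟨hmem₀, hmem₁⟩, heq]
    _ = ξ j := by rw [← xi_copyShift_add hneg hpre n hj, add_sub_cancel]

theorem hasReturnIn_paddedRange_succ_of_halves {n w : ℕ} {B : ℤ} (hwn : w ≤ n) (hB : 1 ≤ B)
    (hfirst : ∀ a : ℤ, -(n + 1 : ℤ) ≤ a → a + w < copyShift n →
      HasReturnIn ξ B (paddedRange (n + 1)) a w)
    (hsecond : ∀ a : ℤ, -(n + 1 : ℤ) ≤ a → a + w < copyShift n →
      HasReturnIn ξ B (paddedRange (n + 1)) (copyShift n + a) w)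
    {a : ℤ} (h₀ : -(n + 2 : ℤ) ≤ a) (h₁ : a + w < copyShift (n + 1)) :
    HasReturnIn ξ B (paddedRange (n + 1)) a w := by
  have hc : copyShift n = wordLen n + n + 1 := rfl
  have hc' := copyShift_succ n
  have hL : (wordLen (n + 1) : ℤ) = copyShift n + wordLen n := by
    rw [wordLen_succ, hc]; push_cast; ring
  by_cases hl : -(n + 1 : ℤ) ≤ a ∧ a + w < copyShift n
  · exact hfirst a hl.1 hl.2
  by_cases hr : (wordLen n : ℤ) ≤ a ∧ a + w < 2 * copyShift n
  · simpa using hsecond (a - copyShift n) (by omega) (by omega)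
  rcases lt_or_ge a (-(n + 1)) with hleft | hright
  · -- the window lies in the negative half-line
    refine ⟨1, one_ne_zero, by simpa using hB, fun j ⟨hj₀, hj₁⟩ =>
      ⟨⟨by push_cast; omega, by omega⟩, ?_⟩⟩
    rw [hneg j (by omega), hneg (j + 1) (by omega)]
  · -- the window lies in the zero block following `wordW (n + 1)`
    refine ⟨-1, by norm_num, by simpa using hB, fun j ⟨hj₀, hj₁⟩ =>
      ⟨⟨by push_cast; omega, by omega⟩, ?_⟩⟩
    rw [xi_eq_false_of_mem_gap hpre (n + 1) (by omega) (by omega),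
      xi_eq_false_of_mem_gap hpre (n + 1) (by omega) (by omega)]

theorem hasReturnIn_paddedRange {w n : ℕ} (hn : w + 1 ≤ n) {a : ℤ} (h₀ : -(n + 1 : ℤ) ≤ a)
    (h₁ : a + w < copyShift n) : HasReturnIn ξ (copyShift w) (paddedRange n) a w := by
  induction n, hn using Nat.le_induction generalizing a with
  | base =>
    have hc := copyShift_succ w
    have hc₁ := one_le_copyShift w
    refine hasReturnIn_paddedRange_succ_of_halves hneg hpre le_rfl hc₁ (fun a h₀ h₁ => ?_)
      (fun a h₀ h₁ => ?_) (by push_cast at h₀; omega) h₁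
    · refine ⟨copyShift w, by omega, (abs_of_pos (by omega)).le, fun j ⟨hj₀, hj₁⟩ => ?_⟩
      refine ⟨⟨by push_cast; omega, by omega⟩, ?_⟩
      rw [add_comm, xi_copyShift_add hneg hpre w ⟨by omega, by omega⟩]
    · refine ⟨-copyShift w, by omega, by rw [abs_neg, abs_of_pos (by omega)],
        fun j ⟨hj₀, hj₁⟩ => ?_⟩
      refine ⟨⟨by push_cast; omega, by omega⟩, ?_⟩
      rw [← xi_copyShift_add hneg hpre w (i := j + -copyShift w) ⟨by omega, by omega⟩]
      ring_nf
  | succ n hn ih =>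
    exact hasReturnIn_paddedRange_succ_of_halves hneg hpre (by omega) (one_le_copyShift w)
      (fun a h₀ h₁ => (ih h₀ h₁).mono (paddedRange_subset_succ n))
      (fun a h₀ h₁ => (ih h₀ h₁).copyShift_add hneg hpre h₀ h₁) (by push_cast at h₀; omega) h₁

theorem exists_shift_eqOn_Icc (a : ℤ) (w : ℕ) :
    ∃ t ≠ (0 : ℤ), |t| ≤ copyShift w ∧ ∀ j ∈ Set.Icc a (a + w), ξ (j + t) = ξ j := by
  rcases lt_or_ge (a + w) 0 with hwindow_neg | hwindow_nonneg
  · refine ⟨-1, by norm_num, by simpa using one_le_copyShift w, fun j ⟨_, hj⟩ => ?_⟩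
    rw [hneg j (by omega), hneg _ (by omega)]
  · obtain ⟨t, ht0, htB, ht⟩ := hasReturnIn_paddedRange hneg hpre (n := w + 1 + (a + w).toNat)
      (a := a) le_self_add (by push_cast; omega) (by unfold copyShift; push_cast; omega)
    exact ⟨t, ht0, htB, fun j hj => (ht j hj).2⟩

theorem exists_shift_of_mem_closure_fullOrbit {x : ℤ → Bool}
    (hx : x ∈ closure (fullOrbit (shiftH Bool) ξ)) (r : ℕ) :
    ∃ t ≠ (0 : ℤ), ∀ j : ℤ, |j| ≤ r → x (j + t) = x j := by
  obtain ⟨q, hq⟩ := exists_eq_shift_of_mem_closure_fullOrbit hx (r + copyShift (2 * r))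
  obtain ⟨t, ht0, htB, ht⟩ := exists_shift_eqOn_Icc hneg hpre (q - r) (2 * r)
  refine ⟨t, ht0, fun j hj => ?_⟩
  obtain ⟨hj₀, hj₁⟩ := abs_le.mp hj
  obtain ⟨ht₀, ht₁⟩ := abs_le.mp htB
  rw [hq (j + t) (abs_le.mpr ⟨by omega, by omega⟩), hq j (abs_le.mpr ⟨by omega, by omega⟩),
    add_right_comm, ht (j + q) ⟨by omega, by push_cast; omega⟩]

end OmegaSequence

/-- Let `ξ ∈ {0,1}^ℤ` vanish on negative coordinates and begin (on the
nonnegative coordinates) with each word `ω_n`. Let `X` be the orbit closure of `ξ` under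
the left shift `T`. Then `(X, T)` is topologically transitive, not minimal (the fixed
point `0^∞` lies in `X`), yet every point of `X` is recurrent. -/
theorem stmt_18 (ξ : ℤ → Bool)
    (hneg : ∀ n : ℤ, n < 0 → ξ n = false)
    (hpre : ∀ k : ℕ, ∀ i : ℕ, i < (wordW k).length → ξ (i : ℤ) = (wordW k).getD i false)
    (X : Set (ℤ → Bool)) (hX : X = closure (fullOrbit (shiftH Bool) ξ)) :
    (∃ y ∈ X, X ⊆ closure (fullOrbit (shiftH Bool) y)) ∧
    ((fun _ : ℤ => false) ∈ X) ∧
    ¬ (∀ y ∈ X, X ⊆ closure (fullOrbit (shiftH Bool) y)) ∧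
    (∀ x ∈ X, RecurrentPt (shiftH Bool) x) := by
  subst hX
  have hξX : ξ ∈ closure (fullOrbit (shiftH Bool) ξ) := subset_closure ⟨0, rfl⟩
  have hzero : (fun _ : ℤ => false) ∈ closure (fullOrbit (shiftH Bool) ξ) :=
    mem_closure_of_tendsto (tendsto_iterZ_shiftH_neg_of_eventually_const hneg)
      (.of_forall fun m => ⟨_, rfl⟩)
  refine ⟨⟨ξ, hξX, subset_rfl⟩, hzero, fun hmin => ?_, fun x hx =>
    recurrentPt_shiftH_of_forall_exists_shift
      (exists_shift_of_mem_closure_fullOrbit hneg hpre hx)⟩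
  have hξ : ξ = fun _ => false := by
    simpa [fullOrbit_shiftH_const] using hmin _ hzero hξX
  simpa [hξ, wordW] using hpre 0 0 (by simp [wordW])
end
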